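/- Let u : ℝ × ℝ^m → ℝ be smooth, everywhere positive, ℤ^m-periodic in the spatial variable, with ∂_t u = Δ_x u, and set f = −ln u. Define the entropy N(t) = ∫_{[0,1]^m} u(t,x)·ln u(t,x) dx and the entropy energy E(t) = ∫_{[0,1]^m} |∇f(t,x)|²·u(t,x) dx. Then N is differentiable and N'(t) = −E(t) for every t. -/

import Mathlib

open MeasureTheory
open scoped RealInnerProductSpace

noncomputable section

abbrev E (m : ℕ) := EuclideanSpace ℝ (Fin m)

/-- The standard orthonormal basis of `ℝ^m`. -/
def eE (m : ℕ) (a : Fin m) : E m := EuclideanSpace.single a 1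

/-- Second Fréchet derivative as a bilinear form. -/
def D2E (m : ℕ) (g : E m → ℝ) (x X Y : E m) : ℝ := iteratedFDeriv ℝ 2 g x ![X, Y]

/-- The Laplacian `Δg(x) = Σ_a D²g(x)[e_a, e_a]`. -/
def lapE (m : ℕ) (g : E m → ℝ) (x : E m) : ℝ := ∑ a, D2E m g x (eE m a) (eE m a)

/-- The unit cube `[0,1]^m`. -/
def cube (m : ℕ) : Set (E m) := {x | ∀ i, x i ∈ Set.Icc (0 : ℝ) 1}

/-- The vector of `ℤ^m ⊂ ℝ^m` with integer coordinates `k`. -/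
def latt (m : ℕ) (k : Fin m → ℤ) : E m := WithLp.toLp 2 (fun i => (k i : ℝ))

/-!
Differentiating under the integral sign (legitimate because `∂ₜ(u log u) = ∂ₜu (log u + 1)` is
jointly continuous, hence bounded on `[t - 1, t + 1] × [0,1]^m`) and using the heat equation
gives `N'(t) = ∫ (log u + 1) Δu`. The vector field `(log u + 1) ∇u` is periodic, so by the
divergence theorem its divergence `|∇u|² / u + (log u + 1) Δu` integrates to zero over the cube:
the fluxes through opposite faces cancel. Since `∇f = -∇u / u`, the remaining integral
`∫ |∇u|² / u` is `E(t)`.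
-/

lemma cube_eq_preimage_ofLp (m : ℕ) :
    cube m = WithLp.ofLp ⁻¹' Set.Icc (0 : Fin m → ℝ) 1 := by
  ext x
  simp [cube, Pi.le_def, forall_and]

lemma isCompact_cube (m : ℕ) : IsCompact (cube m) := by
  rw [cube_eq_preimage_ofLp]
  exact (PiLp.continuousLinearEquiv 2 ℝ _).toHomeomorph.isCompact_preimage.2 isCompact_Icc

lemma setIntegral_cube (m : ℕ) (g : E m → ℝ) :
    ∫ x in cube m, g x = ∫ y in Set.Icc (0 : Fin m → ℝ) 1, g (WithLp.toLp 2 y) := by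
  rw [cube_eq_preimage_ofLp]
  exact (PiLp.volume_preserving_ofLp (Fin m)).setIntegral_preimage_emb
    (MeasurableEquiv.toLp 2 (Fin m → ℝ)).symm.measurableEmbedding
    (fun y => g (WithLp.toLp 2 y)) _

lemma toLp_insertNth_one {n : ℕ} (i : Fin (n + 1)) (x : Fin n → ℝ) :
    WithLp.toLp 2 (i.insertNth (1 : ℝ) x) =
      WithLp.toLp 2 (i.insertNth 0 x) + latt (n + 1) (Pi.single i 1) := by
  ext j
  rcases eq_or_ne j i with rfl | hj
  · simp [latt]
  · obtain ⟨j, rfl⟩ := Fin.exists_succAbove_eq hj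
    simp [latt]

theorem integral_cube_divergence_eq_zero_of_periodic {m : ℕ} {V : Fin m → E m → ℝ}
    (hV : ∀ i, ContDiff ℝ 1 (V i)) (hper : ∀ i x k, V i (x + latt m k) = V i x) :
    ∫ x in cube m, ∑ i, fderiv ℝ (V i) x (eE m i) = 0 := by
  cases m with
  | zero => simp
  | succ n =>
    set c := (PiLp.continuousLinearEquiv 2 ℝ (fun _ : Fin (n + 1) => ℝ)).symm
    have hdiv := integral_divergence_of_hasFDerivAt_off_countable' 0 1 zero_le_one
      (fun i y => V i (c y)) (fun i y => (fderiv ℝ (V i) (c y)).comp (c : _ →L[ℝ] _)) ∅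
      Set.countable_empty (fun i => ((hV i).continuous.comp c.continuous).continuousOn)
      (fun y _ i => ((hV i).differentiable one_ne_zero (c y)).hasFDerivAt.comp y c.hasFDerivAt)
      ?_
    · rw [setIntegral_cube]
      refine hdiv.trans (Finset.sum_eq_zero fun i _ => sub_eq_zero.2 ?_)
      refine setIntegral_congr_fun measurableSet_Icc fun x _ => ?_
      change V i (WithLp.toLp 2 _) = V i (WithLp.toLp 2 _)
      rw [Pi.one_apply, Pi.zero_apply, toLp_insertNth_one, hper]
    · refine (continuous_finsetSum _ fun i _ => ?_).continuousOn.integrableOn_Icc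
      exact (((hV i).continuous_fderiv one_ne_zero).comp c.continuous).clm_apply continuous_const

section Calculus

variable {m : ℕ} {g : E m → ℝ}

lemma fderiv_add_latt (hper : ∀ x k, g (x + latt m k) = g x) (x : E m) (k : Fin m → ℤ) :
    fderiv ℝ g (x + latt m k) = fderiv ℝ g x := by
  rw [← fderiv_comp_add_right, funext fun y => hper y k]

variable (g) in
lemma norm_gradient_sq_eq_sum (x : E m) :
    ‖gradient g x‖ ^ 2 = ∑ i, (fderiv ℝ g x (eE m i)) ^ 2 := by
  rw [EuclideanSpace.real_norm_sq_eq]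
  refine Finset.sum_congr rfl fun i _ => ?_
  rw [← inner_gradient_left, eE, EuclideanSpace.inner_single_right, one_mul, conj_trivial]

variable (g) in
lemma lapE_eq_sum_fderiv_fderiv (x : E m) :
    lapE m g x = ∑ i, fderiv ℝ (fderiv ℝ g) x (eE m i) (eE m i) := by
  simp [lapE, D2E, iteratedFDeriv_two_apply]

lemma continuous_lapE (hg : ContDiff ℝ 2 g) : Continuous (lapE m g) := by
  have h : Continuous (fderiv ℝ (fderiv ℝ g)) :=
    (hg.fderiv_right (m := 1) le_rfl).continuous_fderiv one_ne_zero
  simp_rw [funext (lapE_eq_sum_fderiv_fderiv g)]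
  exact continuous_finsetSum _ fun i _ =>
    (h.clm_apply continuous_const).clm_apply continuous_const

lemma sum_fderiv_log_add_one_mul_fderiv (hg : ContDiff ℝ 2 g) {x : E m} (hx : g x ≠ 0) :
    ∑ i, fderiv ℝ (fun y => (Real.log (g y) + 1) * fderiv ℝ g y (eE m i)) x (eE m i)
      = ‖gradient g x‖ ^ 2 / g x + (Real.log (g x) + 1) * lapE m g x := by
  have hD : DifferentiableAt ℝ (fderiv ℝ g) x :=
    (hg.fderiv_right (m := 1) le_rfl).differentiable one_ne_zero x
  have hlog : HasFDerivAt (fun y => Real.log (g y) + 1) ((g x)⁻¹ • fderiv ℝ g x) x :=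
    ((hg.differentiable two_ne_zero x).hasFDerivAt.log hx).add_const 1
  have hterm (i : Fin m) :
      fderiv ℝ (fun y => (Real.log (g y) + 1) * fderiv ℝ g y (eE m i)) x (eE m i)
        = (fderiv ℝ g x (eE m i)) ^ 2 / g x
          + (Real.log (g x) + 1) * fderiv ℝ (fderiv ℝ g) x (eE m i) (eE m i) := by
    rw [(hlog.fun_mul (hD.hasFDerivAt.clm_apply (hasFDerivAt_const (eE m i) x))).fderiv]
    simp only [ContinuousLinearMap.comp_zero, zero_add, add_apply, smul_apply,
      ContinuousLinearMap.flip_apply, smul_eq_mul]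
    ring
  rw [Finset.sum_congr rfl fun i _ => hterm i, Finset.sum_add_distrib, ← Finset.sum_div,
    ← Finset.mul_sum, norm_gradient_sq_eq_sum, lapE_eq_sum_fderiv_fderiv]

theorem integral_cube_log_add_one_mul_lapE (hg : ContDiff ℝ 2 g) (hpos : ∀ x, 0 < g x)
    (hper : ∀ x k, g (x + latt m k) = g x) :
    ∫ x in cube m, (Real.log (g x) + 1) * lapE m g x =
      -∫ x in cube m, ‖gradient g x‖ ^ 2 / g x := by
  have hV : ∀ i, ContDiff ℝ 1 (fun y => (Real.log (g y) + 1) * fderiv ℝ g y (eE m i)) :=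
    fun i => (((hg.of_le one_le_two).log fun y => (hpos y).ne').add contDiff_const).mul
      ((hg.fderiv_right le_rfl).clm_apply contDiff_const)
  have hdiv := integral_cube_divergence_eq_zero_of_periodic hV fun i x k => by
    rw [hper, fderiv_add_latt hper]
  simp_rw [sum_fderiv_log_add_one_mul_fderiv hg (hpos _).ne'] at hdiv
  have hgrad : Continuous (gradient g) :=
    (InnerProductSpace.toDual ℝ (E m)).symm.continuous.comp (hg.continuous_fderiv two_ne_zero)
  rw [integral_add] at hdiv
  · linarith
  · exact ((hgrad.norm.pow 2).div hg.continuous fun x => (hpos x).ne').continuousOn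
      |>.integrableOn_compact (isCompact_cube m)
  · exact (((hg.continuous.log fun x => (hpos x).ne').add continuous_const).mul
      (continuous_lapE hg)).continuousOn.integrableOn_compact (isCompact_cube m)

end Calculus

section ParametricIntegral

variable {X : Type*} [NormedAddCommGroup X] [NormedSpace ℝ X] {u : ℝ → X → ℝ}

lemma hasDerivAt_apply_of_contDiff_uncurry (hu : ContDiff ℝ 1 (Function.uncurry u)) (t : ℝ)
    (x : X) : HasDerivAt (fun s => u s x) (fderiv ℝ (Function.uncurry u) (t, x) (1, 0)) t :=
  (hu.differentiable one_ne_zero (t, x)).hasFDerivAt.comp_hasDerivAt (f := fun s => (s, x)) t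
    ((hasDerivAt_id' t).prodMk (hasDerivAt_const t x))

theorem hasDerivAt_setIntegral_mul_log [MeasurableSpace X] [OpensMeasurableSpace X]
    {μ : Measure X} [IsFiniteMeasureOnCompacts μ] {K : Set X} (hK : IsCompact K)
    (hu : ContDiff ℝ 1 (Function.uncurry u)) (hu0 : ∀ t x, u t x ≠ 0) (t : ℝ) :
    HasDerivAt (fun s => ∫ x in K, u s x * Real.log (u s x) ∂μ)
      (∫ x in K, deriv (fun s => u s x) t * (Real.log (u t x) + 1) ∂μ) t := by
  set du : ℝ → X → ℝ := fun s x => fderiv ℝ (Function.uncurry u) (s, x) (1, 0)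
  have hderiv : ∀ s x, HasDerivAt (fun s => u s x * Real.log (u s x))
      (du s x * (Real.log (u s x) + 1)) s := fun s x => by
    have h := hasDerivAt_apply_of_contDiff_uncurry hu s x
    refine (h.fun_mul (h.log (hu0 s x))).congr_deriv ?_
    rw [mul_div_cancel₀ _ (hu0 s x)]
    ring
  have hcont : Continuous fun p : ℝ × X => du p.1 p.2 * (Real.log (u p.1 p.2) + 1) :=
    ((hu.continuous_fderiv one_ne_zero).clm_apply continuous_const).mul
      ((hu.continuous.log fun p => hu0 p.1 p.2).add continuous_const)
  have hcont_section : ∀ s, Continuous fun x => u s x * Real.log (u s x) := fun s =>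
    have hus : Continuous (u s) := hu.continuous.comp (Continuous.prodMk_right s)
    hus.mul (hus.log (hu0 s))
  obtain ⟨C, hC⟩ := ((isCompact_closedBall t 1).prod hK).exists_bound_of_continuousOn
    hcont.continuousOn
  have h := (hasDerivAt_integral_of_dominated_loc_of_deriv_le (μ := μ.restrict K)
    (F' := fun s x => du s x * (Real.log (u s x) + 1)) (bound := fun _ => C)
    (Metric.ball_mem_nhds t one_pos)
    (.of_forall fun s => (hcont_section s).aestronglyMeasurable)
    ((hcont_section t).continuousOn.integrableOn_compact hK)
    (hcont.comp (Continuous.prodMk_right t)).aestronglyMeasurable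
    (by
      filter_upwards [ae_restrict_mem hK.measurableSet] with x hx s hs
      exact hC (s, x) ⟨Metric.ball_subset_closedBall hs, hx⟩)
    (integrableOn_const hK.measure_lt_top.ne)
    (.of_forall fun x s _ => hderiv s x)).2
  simpa only [(hasDerivAt_apply_of_contDiff_uncurry hu t _).deriv] using h

end ParametricIntegral

section Gradient

variable {F : Type*} [NormedAddCommGroup F] [InnerProductSpace ℝ F] [CompleteSpace F]
  {g : F → ℝ} {x : F}

lemma gradient_neg_log (hg : DifferentiableAt ℝ g x) (hx : g x ≠ 0) :
    gradient (fun y => -Real.log (g y)) x = -(g x)⁻¹ • gradient g x := by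
  rw [gradient, gradient, (hg.hasFDerivAt.log hx).fun_neg.fderiv, map_neg, map_smul, neg_smul]

lemma norm_gradient_neg_log_sq_mul (hg : DifferentiableAt ℝ g x) (hx : 0 < g x) :
    ‖gradient (fun y => -Real.log (g y)) x‖ ^ 2 * g x = ‖gradient g x‖ ^ 2 / g x := by
  rw [gradient_neg_log hg hx.ne', norm_smul, norm_neg, norm_inv,
    Real.norm_of_nonneg hx.le]
  field_simp

end Gradient

theorem entropy_deriv (m : ℕ) (u : ℝ → E m → ℝ)
    (hu : ContDiff ℝ (⊤ : ℕ∞) (Function.uncurry u)) (hpos : ∀ t x, 0 < u t x)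
    (hper : ∀ (t : ℝ) (x : E m) (k : Fin m → ℤ), u t (x + latt m k) = u t x)
    (hheat : ∀ t x, deriv (fun s => u s x) t = lapE m (u t) x)
    (f : ℝ → E m → ℝ) (hf : f = fun t x => -Real.log (u t x))
    (N Ent : ℝ → ℝ)
    (hN : N = fun t => ∫ x in cube m, u t x * Real.log (u t x))
    (hE : Ent = fun t => ∫ x in cube m, ‖gradient (f t) x‖ ^ 2 * u t x)
    (t : ℝ) :
    HasDerivAt N (-Ent t) t := by
  subst hf hN hE
  have hu2 : ContDiff ℝ 2 (Function.uncurry u) := hu.of_le (WithTop.coe_le_coe.2 le_top)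
  have hut : ContDiff ℝ 2 (u t) := hu2.comp (contDiff_prodMk_right t)
  have h := hasDerivAt_setIntegral_mul_log (μ := volume) (isCompact_cube m) (hu2.of_le one_le_two)
    (fun s x => (hpos s x).ne') t
  simp_rw [hheat t, mul_comm _ (Real.log _ + 1),
    integral_cube_log_add_one_mul_lapE hut (hpos t) (hper t)] at h
  convert h using 2
  exact setIntegral_congr_fun (isCompact_cube m).measurableSet fun x _ =>
    norm_gradient_neg_log_sq_mul (hut.differentiable two_ne_zero x) (hpos t x)
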